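/- arXiv:1811.08474 — 2 statements merged into one kernel-verified Lean document; each statement's English description precedes it below -/
import Mathlib

section
/- Let p_1, p_2, …, p_{N+1} be a dual path and write p̄_{t+1} := E(p_{t+1}|F_t). Then for any path y_0, y_1, …, y_N, the random sequence (p_{t+1}·y_t)_{t=0}^N is a supermartingale with respect to the filtration F_1 ⊆ F_2 ⊆ … ⊆ F_{N+1}, and the random sequence (p̄_{t+1}·y_t)_{t=0}^N is a supermartingale with respect to the filtration F_0 ⊆ F_1 ⊆ … ⊆ F_N. -/
open MeasureTheory

noncomputable section

/-- Scalar product of two vectors in `ℝ^k`. -/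
def dot {k : ℕ} (p a : Fin k → ℝ) : ℝ := ∑ i, p i * a i

/-- `ℓ¹`-norm of a vector in `ℝ^k` (sum of absolute values of the coordinates). -/
def l1 {k : ℕ} (a : Fin k → ℝ) : ℝ := ∑ i, |a i|

/-- The dual cone of a set `X ⊆ ℝ^k`. -/
def dualCone {k : ℕ} (X : Set (Fin k → ℝ)) : Set (Fin k → ℝ) :=
  {p | ∀ a ∈ X, 0 ≤ dot p a}

/-- Positive part of the (extended) logarithm, as an extended nonnegative real. -/
def logPos (r : ℝ) : ENNReal := ENNReal.ofReal (Real.log r)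

/-- Negative part of the (extended) logarithm, with the convention `ln 0 = -∞`
(and also `ln r = -∞` for `r < 0`, a case that never occurs below). -/
def logNeg (r : ℝ) : ENNReal := if r ≤ 0 then ⊤ else ENNReal.ofReal (-(Real.log r))

/-- `elogLE μ f g` expresses the inequality `E ln f ≤ E ln g` of (possibly infinite)
expectations of logarithms, with the convention `ln 0 = -∞`:
it says `E (ln f)⁺ + E (ln g)⁻ ≤ E (ln g)⁺ + E (ln f)⁻` in `[0,∞]`. -/
def elogLE {Ω : Type*} [MeasurableSpace Ω] (μ : Measure Ω) (f g : Ω → ℝ) : Prop :=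
  (∫⁻ ω, logPos (f ω) ∂μ) + (∫⁻ ω, logNeg (g ω) ∂μ) ≤
    (∫⁻ ω, logPos (g ω) ∂μ) + (∫⁻ ω, logNeg (f ω) ∂μ)

/-- Membership in `L_∞(Ω, Ft, P; ℝ^k)`: `Ft`-measurable and essentially bounded. -/
def MemLinf {Ω : Type*} [MeasurableSpace Ω] (μ : Measure Ω) (Ft : MeasurableSpace Ω)
    {k : ℕ} (x : Ω → Fin k → ℝ) : Prop :=
  Measurable[Ft] x ∧ ∃ C : ℝ, ∀ᵐ ω ∂μ, l1 (x ω) ≤ C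

/-- The setting of a stochastic von Neumann–Gale dynamical system over the time
horizon `N`, with state dimensions `m t`:  a filtration `F`, random closed cones
`X t ω ⊆ ℝ^{m t}` and random closed convex cones
`Z t ω ⊆ X (t-1) ω × X t ω` (for `1 ≤ t ≤ N`) with measurable graphs, the
projection of `Z t ω` on the first factor being `X (t-1) ω`. -/
structure VNG (Ω : Type*) [m0 : MeasurableSpace Ω] (μ : Measure Ω) (N : ℕ) (m : ℕ → ℕ) where
  F : ℕ → MeasurableSpace Ω
  X : (t : ℕ) → Ω → Set (Fin (m t) → ℝ)
  Z : (t : ℕ) → Ω → Set ((Fin (m (t - 1)) → ℝ) × (Fin (m t) → ℝ))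
  F_mono : Monotone F
  F_le : ∀ t, F t ≤ m0
  F_top : F N = m0
  F_ext : F (N + 1) = F N
  F_null : ∀ t (s : Set Ω), μ s = 0 → MeasurableSet[F t] s
  X_closed : ∀ t, t ≤ N → ∀ ω, IsClosed (X t ω)
  X_cone : ∀ t, t ≤ N → ∀ ω, ∀ a ∈ X t ω, ∀ c : ℝ, 0 ≤ c → c • a ∈ X t ω
  X_meas : ∀ t, t ≤ N →
    MeasurableSet[(F t).prod inferInstance] {q : Ω × (Fin (m t) → ℝ) | q.2 ∈ X t q.1}
  Z_closed : ∀ t, 1 ≤ t → t ≤ N → ∀ ω, IsClosed (Z t ω)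
  Z_convex : ∀ t, 1 ≤ t → t ≤ N → ∀ ω, Convex ℝ (Z t ω)
  Z_cone : ∀ t, 1 ≤ t → t ≤ N → ∀ ω, ∀ q ∈ Z t ω, ∀ c : ℝ, 0 ≤ c → c • q ∈ Z t ω
  Z_sub : ∀ t, 1 ≤ t → t ≤ N → ∀ ω, Z t ω ⊆ (X (t - 1) ω) ×ˢ (X t ω)
  Z_meas : ∀ t, 1 ≤ t → t ≤ N →
    MeasurableSet[(F t).prod inferInstance]
      {q : Ω × ((Fin (m (t - 1)) → ℝ) × (Fin (m t) → ℝ)) | q.2 ∈ Z t q.1}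
  Z_proj : ∀ t, 1 ≤ t → t ≤ N → ∀ ω, Prod.fst '' (Z t ω) = X (t - 1) ω

namespace VNG

variable {Ω : Type*} [m0 : MeasurableSpace Ω] {μ : Measure Ω} {N : ℕ} {m : ℕ → ℕ}

/-- A random state of the system at time `t`: an element of `𝒳_t`. -/
def RandomState (S : VNG Ω μ N m) (t : ℕ) (x : Ω → Fin (m t) → ℝ) : Prop :=
  MemLinf μ (S.F t) x ∧ ∀ᵐ ω ∂μ, x ω ∈ S.X t ω

/-- A path (trajectory) of the system: random states `x 0, …, x N` with
`(x (t-1) ω, x t ω) ∈ Z t ω` a.s. for `t = 1, …, N`. -/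
def IsPath (S : VNG Ω μ N m) (x : (t : ℕ) → Ω → Fin (m t) → ℝ) : Prop :=
  (∀ t, t ≤ N → S.RandomState t (x t)) ∧
  (∀ t, 1 ≤ t → t ≤ N → ∀ᵐ ω ∂μ, (x (t - 1) ω, x t ω) ∈ S.Z t ω)

/-- A dual path: integrable `F t`-measurable `p t`, `t = 1, …, N+1`, with values in the
dual cones `X_{t-1}^*` a.s., such that `E(p_{t+1} | F_t)·b ≤ p_t·a` for all
`(a,b) ∈ Z t ω`, almost surely, for `t = 1, …, N`. -/
def IsDualPath (S : VNG Ω μ N m) (p : (t : ℕ) → Ω → Fin (m (t - 1)) → ℝ) : Prop :=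
  (∀ t, 1 ≤ t → t ≤ N + 1 →
    Measurable[S.F t] (p t) ∧ Integrable (p t) μ ∧
      ∀ᵐ ω ∂μ, p t ω ∈ dualCone (S.X (t - 1) ω)) ∧
  (∀ t, 1 ≤ t → t ≤ N →
    ∀ᵐ ω ∂μ, ∀ ab ∈ S.Z t ω, dot ((μ[p (t + 1) | S.F t]) ω) ab.2 ≤ dot (p t ω) ab.1)

/-- The dual path `p` supports the path `x`: `p_{t+1}·x_t = 1` a.s. for `t = 0, …, N`. -/
def Supports (S : VNG Ω μ N m) (p : (t : ℕ) → Ω → Fin (m (t - 1)) → ℝ)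
    (x : (t : ℕ) → Ω → Fin (m t) → ℝ) : Prop :=
  ∀ t, t ≤ N → ∀ᵐ ω ∂μ, dot (p (t + 1) ω) (x t ω) = 1

/-- A path is rapid if some dual path supports it. -/
def Rapid (S : VNG Ω μ N m) (x : (t : ℕ) → Ω → Fin (m t) → ℝ) : Prop :=
  ∃ p, S.IsDualPath p ∧ S.Supports p x

/-- Assumption (A1). -/
def A1 (S : VNG Ω μ N m) : Prop :=
  ∀ t, t ≤ N → ∃ (q : Ω → Fin (m t) → ℝ) (H : Ω → ℝ),
    Measurable[S.F t] q ∧ Measurable[S.F t] H ∧ (∀ ω, 1 ≤ H ω) ∧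
    Integrable (fun ω => Real.log (H ω)) μ ∧
    (∀ ω, q ω ∈ dualCone (S.X t ω)) ∧
    (∀ ω, ∀ a ∈ S.X t ω, (H ω)⁻¹ * l1 a ≤ dot (q ω) a ∧ dot (q ω) a ≤ H ω * l1 a)

/-- Assumption (A2). -/
def A2 (S : VNG Ω μ N m) : Prop :=
  ∀ t, 1 ≤ t → t ≤ N → ∀ ω, ∀ a ∈ S.X (t - 1) ω, ∃ b ∈ S.X t ω, (a, b) ∈ S.Z t ω

/-- Assumption (A3). -/
def A3 (S : VNG Ω μ N m) : Prop :=
  ∃ K : ℕ → ℝ, ∀ t, 1 ≤ t → t ≤ N → ∀ ω, ∀ ab ∈ S.Z t ω, l1 ab.2 ≤ K t * l1 ab.1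

/-- Assumption (A4). -/
def A4 (S : VNG Ω μ N m) : Prop :=
  ∀ t, 1 ≤ t → t ≤ N →
    ∃ (x' : Ω → Fin (m (t - 1)) → ℝ) (y' : Ω → Fin (m t) → ℝ) (C ε : ℝ),
      0 < ε ∧ Measurable[S.F t] x' ∧ Measurable[S.F t] y' ∧
      (∀ ω, l1 (x' ω) ≤ C ∧ l1 (y' ω) ≤ C) ∧
      (∀ ω, (x' ω, y' ω) ∈ S.Z t ω) ∧
      (∀ ω, ∀ b, l1 (b - y' ω) ≤ ε → b ∈ S.X t ω)

open Classical in
/-- Membership in the class `Ψ_N` of utility functions. -/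
def MemPsi (S : VNG Ω μ N m) (ψ : Ω → (Fin (m N) → ℝ) → ℝ) : Prop :=
  (∀ ω, ∀ a ∈ S.X N ω, 0 ≤ ψ ω a) ∧
  (∀ ω, ContinuousOn (ψ ω) (S.X N ω)) ∧
  Measurable[(S.F N).prod inferInstance]
    (fun q : Ω × (Fin (m N) → ℝ) =>
      if q.2 ∈ S.X N q.1 then ((ψ q.1 q.2 : ℝ) : EReal) else (⊤ : EReal)) ∧
  (∀ ω, ∀ a ∈ S.X N ω, ∀ a' ∈ S.X N ω, ψ ω a + ψ ω a' ≤ ψ ω (a + a')) ∧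
  (∀ ω, ∀ a ∈ S.X N ω, ∀ c : ℝ, 0 ≤ c → ψ ω (c • a) = c * ψ ω a) ∧
  ∃ Hψ : Ω → ℝ, (∀ ω, 0 < Hψ ω) ∧
    Integrable (fun ω => |Real.log (Hψ ω)|) μ ∧
    (∀ ω, ∀ a ∈ S.X N ω, (Hψ ω)⁻¹ * l1 a ≤ ψ ω a ∧ ψ ω a ≤ Hψ ω * l1 a)

/-- The fixed initial state `x₀`: `F 0`-measurable, essentially bounded, with a ball
`B(x₀(ω), ε₀) ⊆ X 0 ω` a.s. for some constant `ε₀ > 0`. -/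
def IsInitial (S : VNG Ω μ N m) (x₀ : Ω → Fin (m 0) → ℝ) : Prop :=
  Measurable[S.F 0] x₀ ∧ (∃ C : ℝ, ∀ᵐ ω ∂μ, l1 (x₀ ω) ≤ C) ∧
  ∃ ε₀ : ℝ, 0 < ε₀ ∧ ∀ᵐ ω ∂μ, ∀ b, l1 (b - x₀ ω) ≤ ε₀ → b ∈ S.X 0 ω

/-- Membership in the set `𝒲` of sequences `ζ = (v₀, u₁, v₁, …, u_N, v_N, u_{N+1})`. -/
def MemW (S : VNG Ω μ N m) (ψ : Ω → (Fin (m N) → ℝ) → ℝ) (x₀ : Ω → Fin (m 0) → ℝ)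
    (v : (t : ℕ) → Ω → Fin (m t) → ℝ) (u : (t : ℕ) → Ω → Fin (m (t - 1)) → ℝ) : Prop :=
  v 0 = x₀ ∧
  (∀ t, t ≤ N → S.RandomState t (v t)) ∧
  (∀ t, 1 ≤ t → t ≤ N + 1 → MemLinf μ (S.F t) (u t) ∧ ∀ᵐ ω ∂μ, u t ω ∈ S.X (t - 1) ω) ∧
  (∀ t, 1 ≤ t → t ≤ N → ∀ᵐ ω ∂μ, (u t ω, v t ω) ∈ S.Z t ω) ∧
  (∫⁻ ω, logNeg (ψ ω (u (N + 1) ω)) ∂μ) < ⊤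

end VNG

/-!
The dual-path inequality `E(p_{t+1}|F_t)·b ≤ p_t·a` on `Z_t`, evaluated at the path step
`(a, b) = (y_{t-1}, y_t)`, gives `p̄_{t+1}·y_t ≤ p_t·y_{t-1}`. Since `y_t` is bounded and
`F_t`-measurable, it can be pulled out of the conditional expectation:
`E(p_{t+1}·y_t | F_t) = p̄_{t+1}·y_t`. Together these two facts are the one-step
supermartingale inequalities of both sequences (for the second one after conditioning on `F_{t-1}`),
and one-step inequalities propagate along the tower property.
-/

section Dot

variable {k : ℕ}

/-- `dotCLM k p a` unfolds to `dot p a`. -/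
def dotCLM (k : ℕ) : (Fin k → ℝ) →L[ℝ] (Fin k → ℝ) →L[ℝ] ℝ :=
  (dotProductBilin ℝ ℝ).toContinuousBilinearMap

lemma norm_le_l1 (a : Fin k → ℝ) : ‖a‖ ≤ l1 a :=
  (pi_norm_le_iff_of_nonneg (Finset.sum_nonneg fun i _ => abs_nonneg (a i))).2 fun i =>
    Finset.single_le_sum (f := fun j => |a j|) (fun j _ => abs_nonneg (a j)) (Finset.mem_univ i)

variable {Ω : Type*} {m m0 : MeasurableSpace Ω} {μ : Measure Ω} {p x : Ω → Fin k → ℝ} {C : ℝ}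

lemma stronglyMeasurable_dot (hp : StronglyMeasurable[m] p) (hx : StronglyMeasurable[m] x) :
    StronglyMeasurable[m] fun ω => dot (p ω) (x ω) :=
  (dotCLM k).continuous₂.comp_stronglyMeasurable (hp.prodMk hx)

lemma integrable_dot_of_ae_norm_le (hp : Integrable p μ) (hx : AEStronglyMeasurable x μ)
    (hC : ∀ᵐ ω ∂μ, ‖x ω‖ ≤ C) : Integrable (fun ω => dot (p ω) (x ω)) μ :=
  (dotCLM k).integrable_of_bilin_of_bdd_right C hp hx hC

lemma condExp_dot_of_stronglyMeasurable (hm : m ≤ m0) (hp : Integrable p μ)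
    (hx : StronglyMeasurable[m] x) (hC : ∀ᵐ ω ∂μ, ‖x ω‖ ≤ C) :
    μ[fun ω => dot (p ω) (x ω) | m] =ᵐ[μ] fun ω => dot (μ[p | m] ω) (x ω) :=
  condExp_bilin_of_stronglyMeasurable_left (dotCLM k).flip hx
    (integrable_dot_of_ae_norm_le hp (hx.mono hm).aestronglyMeasurable hC) hp

end Dot

lemma supermartingale_fin_of_condExp_succ_le {Ω : Type*} {m0 : MeasurableSpace Ω} {μ : Measure Ω}
    {N : ℕ} {ℱ : Filtration (Fin (N + 1)) m0} [SigmaFiniteFiltration μ ℱ]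
    {f : Fin (N + 1) → Ω → ℝ} (hadp : StronglyAdapted ℱ f) (hint : ∀ i, Integrable (f i) μ)
    (hstep : ∀ i : Fin N, μ[f i.succ | ℱ i.castSucc] ≤ᵐ[μ] f i.castSucc) :
    Supermartingale f ℱ μ := by
  have hself : ∀ i, μ[f i | ℱ i] = f i := fun i =>
    condExp_of_stronglyMeasurable (ℱ.le i) (hadp i) (hint i)
  refine ⟨hadp, fun i j hij => ?_, hint⟩
  induction j using Fin.induction with
  | zero => rw [le_antisymm hij (Fin.zero_le i), hself]
  | succ j ih =>
    rcases hij.lt_or_eq with hlt | rfl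
    · have hij' : i ≤ j.castSucc := Fin.le_castSucc_iff.2 hlt
      calc μ[f j.succ | ℱ i]
          =ᵐ[μ] μ[μ[f j.succ | ℱ j.castSucc] | ℱ i] :=
            (condExp_condExp_of_le (ℱ.mono hij') (ℱ.le _)).symm
        _ ≤ᵐ[μ] μ[f j.castSucc | ℱ i] := condExp_mono integrable_condExp (hint _) (hstep j)
        _ ≤ᵐ[μ] f i := ih hij'
    · rw [hself]

namespace VNG

variable {Ω : Type*} [m0 : MeasurableSpace Ω] {μ : Measure Ω} {N : ℕ} {m : ℕ → ℕ}
  {S : VNG Ω μ N m} {p : (t : ℕ) → Ω → Fin (m (t - 1)) → ℝ} {y : (t : ℕ) → Ω → Fin (m t) → ℝ}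
  {t : ℕ}

lemma IsPath.stronglyMeasurable (hy : S.IsPath y) (ht : t ≤ N) :
    StronglyMeasurable[S.F t] (y t) :=
  (hy.1 t ht).1.1.stronglyMeasurable

lemma IsPath.exists_ae_norm_le (hy : S.IsPath y) (ht : t ≤ N) :
    ∃ C, ∀ᵐ ω ∂μ, ‖y t ω‖ ≤ C := by
  obtain ⟨C, hC⟩ := (hy.1 t ht).1.2
  exact ⟨C, hC.mono fun ω hω => (norm_le_l1 _).trans hω⟩

lemma IsPath.integrable_dot_condExp (hy : S.IsPath y) (ht : t ≤ N) (q : Ω → Fin (m t) → ℝ) :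
    Integrable (fun ω => dot (μ[q | S.F t] ω) (y t ω)) μ :=
  have ⟨_, hC⟩ := hy.exists_ae_norm_le ht
  integrable_dot_of_ae_norm_le integrable_condExp
    ((hy.stronglyMeasurable ht).mono (S.F_le t)).aestronglyMeasurable hC

lemma IsDualPath.stronglyMeasurable (hp : S.IsDualPath p) (ht : t ≤ N) :
    StronglyMeasurable[S.F (t + 1)] (p (t + 1)) :=
  (hp.1 (t + 1) (Nat.le_add_left 1 t) (Nat.add_le_add_right ht 1)).1.stronglyMeasurable

lemma IsDualPath.integrable (hp : S.IsDualPath p) (ht : t ≤ N) : Integrable (p (t + 1)) μ :=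
  (hp.1 (t + 1) (Nat.le_add_left 1 t) (Nat.add_le_add_right ht 1)).2.1

lemma IsDualPath.stronglyMeasurable_dot (hp : S.IsDualPath p) (hy : S.IsPath y) (ht : t ≤ N) :
    StronglyMeasurable[S.F (t + 1)] fun ω => dot (p (t + 1) ω) (y t ω) :=
  _root_.stronglyMeasurable_dot (hp.stronglyMeasurable ht)
    ((hy.stronglyMeasurable ht).mono (S.F_mono t.le_succ))

lemma IsDualPath.integrable_dot (hp : S.IsDualPath p) (hy : S.IsPath y) (ht : t ≤ N) :
    Integrable (fun ω => dot (p (t + 1) ω) (y t ω)) μ :=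
  have ⟨_, hC⟩ := hy.exists_ae_norm_le ht
  integrable_dot_of_ae_norm_le (hp.integrable ht)
    ((hy.stronglyMeasurable ht).mono (S.F_le t)).aestronglyMeasurable hC

lemma IsDualPath.condExp_dot (hp : S.IsDualPath p) (hy : S.IsPath y) (ht : t ≤ N) :
    μ[fun ω => dot (p (t + 1) ω) (y t ω) | S.F t] =ᵐ[μ]
      fun ω => dot (μ[p (t + 1) | S.F t] ω) (y t ω) :=
  have ⟨_, hC⟩ := hy.exists_ae_norm_le ht
  condExp_dot_of_stronglyMeasurable (S.F_le t) (hp.integrable ht) (hy.stronglyMeasurable ht) hC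

lemma IsDualPath.dot_condExp_succ_le (hp : S.IsDualPath p) (hy : S.IsPath y) (ht : t < N) :
    (fun ω => dot (μ[p (t + 2) | S.F (t + 1)] ω) (y (t + 1) ω)) ≤ᵐ[μ]
      fun ω => dot (p (t + 1) ω) (y t ω) := by
  filter_upwards [hp.2 (t + 1) t.succ_pos ht, hy.2 (t + 1) t.succ_pos ht] with ω hdual hstep
  exact hdual _ hstep

lemma IsDualPath.condExp_dot_succ_le (hp : S.IsDualPath p) (hy : S.IsPath y) (ht : t < N) :
    μ[fun ω => dot (p (t + 2) ω) (y (t + 1) ω) | S.F (t + 1)] ≤ᵐ[μ]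
      fun ω => dot (p (t + 1) ω) (y t ω) :=
  (hp.condExp_dot hy ht).trans_le (hp.dot_condExp_succ_le hy ht)

lemma IsDualPath.condExp_dot_condExp_succ_le (hp : S.IsDualPath p) (hy : S.IsPath y)
    (ht : t < N) :
    μ[fun ω => dot (μ[p (t + 2) | S.F (t + 1)] ω) (y (t + 1) ω) | S.F t] ≤ᵐ[μ]
      fun ω => dot (μ[p (t + 1) | S.F t] ω) (y t ω) :=
  calc μ[fun ω => dot (μ[p (t + 2) | S.F (t + 1)] ω) (y (t + 1) ω) | S.F t]
      ≤ᵐ[μ] μ[fun ω => dot (p (t + 1) ω) (y t ω) | S.F t] :=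
        condExp_mono (hy.integrable_dot_condExp ht _) (hp.integrable_dot hy ht.le)
          (hp.dot_condExp_succ_le hy ht)
    _ =ᵐ[μ] fun ω => dot (μ[p (t + 1) | S.F t] ω) (y t ω) := hp.condExp_dot hy ht.le

end VNG

open MeasureTheory in
/-- **Proposition 3**: for a dual path `p` and any path `y`, the sequence
`(p_{t+1}·y_t)_{t=0}^N` is a supermartingale w.r.t. the filtration
`F_1 ⊆ … ⊆ F_{N+1}`, and the sequence `(p̄_{t+1}·y_t)_{t=0}^N`, where
`p̄_{t+1} = E(p_{t+1}|F_t)`, is a supermartingale w.r.t. `F_0 ⊆ … ⊆ F_N`. -/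
theorem dual_path_supermartingale
    {Ω : Type*} [m0 : MeasurableSpace Ω] {μ : MeasureTheory.Measure Ω}
    [MeasureTheory.IsProbabilityMeasure μ]
    {N : ℕ} {m : ℕ → ℕ} (S : VNG Ω μ N m)
    (p : (t : ℕ) → Ω → Fin (m (t - 1)) → ℝ) (hp : S.IsDualPath p)
    (y : (t : ℕ) → Ω → Fin (m t) → ℝ) (hy : S.IsPath y)
    (G H : MeasureTheory.Filtration (Fin (N + 1)) m0)
    (hG : ∀ i : Fin (N + 1), G i = S.F ((i : ℕ) + 1))
    (hH : ∀ i : Fin (N + 1), H i = S.F (i : ℕ)) :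
    MeasureTheory.Supermartingale
      (fun (i : Fin (N + 1)) ω => dot (p ((i : ℕ) + 1) ω) (y (i : ℕ) ω)) G μ ∧
    MeasureTheory.Supermartingale
      (fun (i : Fin (N + 1)) ω =>
        dot ((μ[p ((i : ℕ) + 1) | S.F (i : ℕ)]) ω) (y (i : ℕ) ω)) H μ := by
  constructor
  · refine supermartingale_fin_of_condExp_succ_le (fun i => ?_)
      (fun i => hp.integrable_dot hy i.is_le) (fun i => ?_)
    · rw [hG]
      exact hp.stronglyMeasurable_dot hy i.is_le
    · rw [hG]
      exact hp.condExp_dot_succ_le hy i.is_lt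
  · refine supermartingale_fin_of_condExp_succ_le (fun i => ?_)
      (fun i => hy.integrable_dot_condExp i.is_le _) (fun i => ?_)
    · rw [hH]
      exact stronglyMeasurable_dot stronglyMeasurable_condExp (hy.stronglyMeasurable i.is_le)
    · rw [hH]
      exact hp.condExp_dot_condExp_succ_le hy i.is_lt
end
end

section
/- For every t ∈ {1,…,N} and every u ∈ 𝒰_t, there exists v ∈ 𝒱_t such that (u, v) ∈ 𝒲_t, i.e. (u(ω), v(ω)) ∈ Z_t(ω) almost surely. -/
open MeasureTheory

noncomputable section

/-!
The fibres `{b | (u ω, b) ∈ Z_t ω}` are closed, nonempty almost surely by (A2), and form a set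
that is `F_t ⊗ Borel`-measurable in `(ω, b)`. Because `F_t` is complete, the measurable
projection theorem makes `{ω | the fibre meets U}` an `F_t`-measurable set for every open `U`:
the projection is the preimage, under an `F_t`-measurable map into Cantor space, of an analytic
set, and analytic sets are measurable for the completion of any finite measure (Choquet's
capacitability argument on Baire space). The Kuratowski–Ryll-Nardzewski theorem then gives an
`F_t`-measurable selector `v`, and (A3) bounds `|v| ≤ K_t |u|`.
-/

open Set Filter Topology Function

theorem MeasurableSet.exists_prodMap_preimage {Ω Y : Type*} {mΩ : MeasurableSpace Ω}
    [MeasurableSpace Y] {A : Set (Ω × Y)} (hA : MeasurableSet A) :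
    ∃ (φ : Ω → ℕ → Bool) (B : Set ((ℕ → Bool) × Y)),
      Measurable φ ∧ MeasurableSet B ∧ A = Prod.map φ id ⁻¹' B := by
  rw [← generateFrom_prod] at hA
  induction A, hA using MeasurableSpace.generateFrom_induction with
  | hC _ hrect =>
    obtain ⟨s, hs, t, ht, rfl⟩ := hrect
    classical
    refine ⟨fun ω _ => decide (ω ∈ s), {p | p.1 0 = true} ∩ Prod.snd ⁻¹' t,
      measurable_pi_lambda _ fun _ => measurable_to_bool (by simpa [preimage] using hs), ?_, ?_⟩
    · have h0 : Measurable fun p : (ℕ → Bool) × Y => p.1 0 :=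
        (measurable_pi_apply 0).comp measurable_fst
      exact (h0 (measurableSet_singleton true)).inter (measurable_snd ht)
    · ext p; simp
  | empty => exact ⟨fun _ _ => true, ∅, measurable_const, .empty, rfl⟩
  | compl _ _ ih =>
    obtain ⟨φ, B, hφ, hB, rfl⟩ := ih
    exact ⟨φ, Bᶜ, hφ, hB.compl, rfl⟩
  | iUnion A _ ih =>
    choose φ B hφ hB hA using ih
    -- `block n` reads off the `n`-th of countably many sequences interleaved by `Nat.pair`
    let block (n : ℕ) : (ℕ → Bool) → ℕ → Bool := fun a i => a (Nat.pair n i)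
    refine ⟨fun ω j => φ (Nat.unpair j).1 ω (Nat.unpair j).2,
      ⋃ n, Prod.map (block n) id ⁻¹' B n,
      measurable_pi_lambda _ fun j => (measurable_pi_apply _).comp (hφ _),
      .iUnion fun n => ((measurable_pi_lambda _ fun i => measurable_pi_apply _).prodMap
        measurable_id) (hB n), ?_⟩
    simp only [preimage_iUnion, hA]
    congr! 2 with n
    ext
    simp [block, Prod.map]

theorem exists_forall_of_exists_update {α : Type*} {P : ℕ → (ℕ → α) → Prop}
    (hP : ∀ n g g', (∀ i < n, g i = g' i) → P n g → P n g') {g₀ : ℕ → α} (h₀ : P 0 g₀)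
    (hstep : ∀ n g, P n g → ∃ a, P (n + 1) (update g n a)) :
    ∃ g, ∀ n, P n g := by
  choose a ha using hstep
  let seq : (n : ℕ) → {g // P n g} :=
    Nat.rec ⟨g₀, h₀⟩ fun n g => ⟨update g.1 n (a n g.1 g.2), ha n g.1 g.2⟩
  have hseq : ∀ n, ∀ i < n, (seq n).1 i = (seq (i + 1)).1 i := by
    intro n
    induction n with
    | zero => simp
    | succ n ih =>
      intro i hi
      rcases Nat.lt_succ_iff_lt_or_eq.1 hi with hi | rfl
      · exact (update_of_ne hi.ne _ _).trans (ih i hi)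
      · rfl
  exact ⟨fun i => (seq (i + 1)).1 i, fun n => hP n _ _ (hseq n) (seq n).2⟩

def prefixBox (g : ℕ → ℕ) (n : ℕ) : Set (ℕ → ℕ) := {x | ∀ i < n, x i ≤ g i}

theorem prefixBox_congr {g g' : ℕ → ℕ} {n : ℕ} (h : ∀ i < n, g i = g' i) :
    prefixBox g n = prefixBox g' n := by
  ext x
  simp +contextual only [prefixBox, mem_ofPred_eq, h]

theorem antitone_prefixBox (g : ℕ → ℕ) : Antitone (prefixBox g) :=
  fun _ _ hnm _ hx i hi => hx i (hi.trans_le hnm)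

theorem monotone_prefixBox_update (g : ℕ → ℕ) (n : ℕ) :
    Monotone fun j => prefixBox (update g n j) (n + 1) := by
  intro j j' hj x hx i hi
  rcases Nat.lt_succ_iff_lt_or_eq.1 hi with hi | rfl
  · simpa [update_of_ne hi.ne] using hx i (Nat.lt_succ_of_lt hi)
  · simpa using (hx i hi).trans (by simpa using hj)

theorem iUnion_prefixBox_update (g : ℕ → ℕ) (n : ℕ) :
    ⋃ j, prefixBox (update g n j) (n + 1) = prefixBox g n := by
  ext x
  simp only [mem_iUnion, prefixBox, mem_ofPred_eq]
  constructor
  · rintro ⟨j, hj⟩ i hi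
    simpa [update_of_ne hi.ne] using hj i (Nat.lt_succ_of_lt hi)
  · intro hx
    refine ⟨x n, fun i hi => ?_⟩
    rcases Nat.lt_succ_iff_lt_or_eq.1 hi with hi | rfl
    · simpa [update_of_ne hi.ne] using hx i hi
    · simp

theorem isCompact_pi_Iic (g : ℕ → ℕ) : IsCompact (univ.pi fun i => Iic (g i)) :=
  isCompact_univ_pi fun i => (finite_Iic (g i)).isCompact

section Capacity

variable {X : Type*} {f : (ℕ → ℕ) → X}

theorem exists_lt_measure_image_prefixBox_update [MeasurableSpace X] (ν : Measure X)
    {r : ENNReal} {g : ℕ → ℕ} {n : ℕ} (h : r < ν (f '' prefixBox g n)) :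
    ∃ j, r < ν (f '' prefixBox (update g n j) (n + 1)) := by
  have hmono : Monotone fun j => f '' prefixBox (update g n j) (n + 1) :=
    fun _ _ hj => image_mono (monotone_prefixBox_update g n hj)
  rwa [← iUnion_prefixBox_update, image_iUnion, hmono.measure_iUnion, lt_iSup_iff] at h

theorem mem_image_pi_Iic_of_mem_iInter_closure [TopologicalSpace X] [T2Space X]
    [FirstCountableTopology X] (hf : Continuous f) {g : ℕ → ℕ} {y : X}
    (hy : y ∈ ⋂ n, closure (f '' prefixBox g n)) :
    y ∈ f '' univ.pi (fun i => Iic (g i)) := by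
  obtain ⟨U, hU⟩ := (𝓝 y).exists_antitone_basis
  have hx : ∀ n, ∃ x ∈ prefixBox g n, f x ∈ U n := fun n => by
    obtain ⟨_, hfx, x, hx, rfl⟩ :=
      mem_closure_iff_nhds.1 (mem_iInter.1 hy n) (U n) (hU.1.mem_of_mem trivial)
    exact ⟨x, hx, hfx⟩
  choose x hxg hxU using hx
  -- clamping `x n` below `g` changes only coordinates `≥ n`, and lands in a compact set
  obtain ⟨a, ha, φ, hφ, hlim⟩ := (isCompact_pi_Iic g).tendsto_subseq
    (x := fun n => x n ⊓ g) fun n i _ => mem_Iic.2 (inf_le_right (a := x n i))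
  have hxlim : Tendsto (fun j => x (φ j)) atTop (𝓝 a) := by
    refine tendsto_pi_nhds.2 fun i => ((continuous_apply i).tendsto a).comp hlim |>.congr' ?_
    filter_upwards [eventually_gt_atTop i] with j hj
    exact inf_of_le_left (hxg (φ j) i (hj.trans_le (hφ.id_le j)))
  refine ⟨a, ha, tendsto_nhds_unique ((hf.tendsto a).comp hxlim) ?_⟩
  exact (hU.tendsto hxU).comp hφ.tendsto_atTop

theorem exists_isCompact_subset_range_le_measure [TopologicalSpace X] [T2Space X]
    [FirstCountableTopology X] [MeasurableSpace X] [OpensMeasurableSpace X] (hf : Continuous f)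
    (ν : Measure X) [IsFiniteMeasure ν] {r : ENNReal} (hr : r < ν (range f)) :
    ∃ K, IsCompact K ∧ K ⊆ range f ∧ r ≤ ν K := by
  obtain ⟨g, hg⟩ :=
    exists_forall_of_exists_update (P := fun n g => r < ν (f '' prefixBox g n))
    (fun n g g' h => by simp only [prefixBox_congr h, imp_self]) (g₀ := 0)
    (by simpa [prefixBox] using hr) fun n g => exists_lt_measure_image_prefixBox_update ν
  refine ⟨_, (isCompact_pi_Iic g).image hf, image_subset_range _ _, ?_⟩
  have hlim := tendsto_measure_iInter_atTop
    (fun n => isClosed_closure.measurableSet.nullMeasurableSet)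
    (fun n m hnm => closure_mono (image_mono (antitone_prefixBox g hnm)))
    ⟨0, measure_ne_top ν (closure (f '' prefixBox g 0))⟩
  refine (ge_of_tendsto hlim (Eventually.of_forall fun n => ?_)).trans
    (measure_mono fun y hy => mem_image_pi_Iic_of_mem_iInter_closure hf hy)
  exact (hg n).le.trans (measure_mono subset_closure)

end Capacity

namespace MeasureTheory

theorem nullMeasurableSet_of_forall_lt_exists_subset {α : Type*} [MeasurableSpace α]
    {ν : Measure α} [IsFiniteMeasure ν] {s : Set α}
    (h : ∀ r < ν s, ∃ K ⊆ s, MeasurableSet K ∧ r ≤ ν K) : NullMeasurableSet s ν := by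
  rcases eq_zero_or_pos (ν s) with hs | hs
  · exact .of_null hs
  obtain ⟨r, -, hr, hlim⟩ := exists_seq_strictMono_tendsto' hs
  choose K hKs hK hrK using fun n => h (r n) (hr n).2
  have hle : ν s ≤ ν (⋃ n, K n) :=
    le_of_tendsto' hlim fun n => (hrK n).trans (measure_mono (subset_iUnion K n))
  exact (MeasurableSet.iUnion hK).nullMeasurableSet.congr
    (ae_eq_of_subset_of_measure_ge (iUnion_subset hKs) hle
      (MeasurableSet.iUnion hK).nullMeasurableSet (measure_ne_top ν s))

theorem AnalyticSet.nullMeasurableSet {X : Type*} [TopologicalSpace X] [T2Space X]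
    [FirstCountableTopology X] [MeasurableSpace X] [OpensMeasurableSpace X] {s : Set X}
    (hs : AnalyticSet s) (ν : Measure X) [IsFiniteMeasure ν] : NullMeasurableSet s ν := by
  rw [AnalyticSet] at hs
  rcases hs with rfl | ⟨f, hf, rfl⟩
  · exact .empty
  refine nullMeasurableSet_of_forall_lt_exists_subset fun r hr => ?_
  obtain ⟨K, hK, hKf, hrK⟩ := exists_isCompact_subset_range_le_measure hf ν hr
  exact ⟨K, hKf, hK.isClosed.measurableSet, hrK⟩

theorem AnalyticSet.exists_measurableSet_subset_preimage_diff_null {Ω X : Type*}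
    {mΩ : MeasurableSpace Ω} [TopologicalSpace X] [T2Space X] [FirstCountableTopology X]
    [MeasurableSpace X] [OpensMeasurableSpace X] {s : Set X} (hs : AnalyticSet s)
    (μ : Measure Ω) [IsFiniteMeasure μ] {φ : Ω → X} (hφ : Measurable φ) :
    ∃ t ⊆ s, MeasurableSet t ∧ μ (φ ⁻¹' (s \ t)) = 0 := by
  obtain ⟨t, hts, ht, hst⟩ :=
    (hs.nullMeasurableSet (μ.map φ)).exists_measurable_subset_ae_eq
  exact ⟨t, hts, ht, nonpos_iff_eq_zero.1
    ((Measure.le_map_apply hφ.aemeasurable _).trans_eq (ae_eq_set.1 hst).2)⟩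

end MeasureTheory

theorem MeasurableSet.image_fst_of_complete {Ω Y : Type*} {m0 : MeasurableSpace Ω}
    {μ : Measure Ω} [IsFiniteMeasure μ] [TopologicalSpace Y] [PolishSpace Y]
    [MeasurableSpace Y] [BorelSpace Y] {G : MeasurableSpace Ω} (hle : G ≤ m0)
    (hnull : ∀ s, μ s = 0 → MeasurableSet[G] s) {A : Set (Ω × Y)}
    (hA : MeasurableSet[G.prod inferInstance] A) : MeasurableSet[G] (Prod.fst '' A) := by
  obtain ⟨φ, B, hφ, hB, rfl⟩ := hA.exists_prodMap_preimage
  have : PolishSpace ((ℕ → Bool) × Y) := {}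
  have hS : AnalyticSet (Prod.fst '' B) := hB.analyticSet.image_of_continuous continuous_fst
  obtain ⟨t, hts, ht, hnull_diff⟩ :=
    hS.exists_measurableSet_subset_preimage_diff_null μ (Measurable.mono hφ hle le_rfl)
  have hfst : Prod.fst '' (Prod.map φ id ⁻¹' B) = φ ⁻¹' (Prod.fst '' B) := by
    ext ω
    simp
  rw [hfst, ← union_sdiff_cancel (preimage_mono hts), ← preimage_sdiff]
  exact (hφ ht).union (hnull _ hnull_diff)

section Selection

open Metric

variable {Ω Y : Type*} {mΩ : MeasurableSpace Ω} [PseudoMetricSpace Y] {A : Set (Ω × Y)}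
  {q : ℕ → Y}

theorem exists_measurable_near_denseRange [MeasurableSpace Y] [OpensMeasurableSpace Y]
    (hq : DenseRange q)
    (hopen : ∀ U : Set Y, IsOpen U → MeasurableSet {ω | ∃ y ∈ U, (ω, y) ∈ A})
    {w : Ω → Y} (hw : Measurable w) {ε δ : ℝ} (hδ : 0 < δ)
    (hwA : ∀ ω, ∃ y, (ω, y) ∈ A ∧ dist y (w ω) < ε) :
    ∃ w', Measurable w' ∧ (∀ ω, ∃ y, (ω, y) ∈ A ∧ dist y (w' ω) < δ) ∧
      ∀ ω, dist (w' ω) (w ω) < ε + δ := by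
  classical
  have hex : ∀ ω, ∃ j, (∃ y ∈ ball (q j) δ, (ω, y) ∈ A) ∧ dist (w ω) (q j) < ε + δ := by
    intro ω
    obtain ⟨y, hyA, hyw⟩ := hwA ω
    obtain ⟨j, hj⟩ := hq.exists_dist_lt y hδ
    refine ⟨j, ⟨y, mem_ball.2 hj, hyA⟩, ?_⟩
    linarith [dist_triangle (w ω) y (q j), dist_comm (w ω) y]
  refine ⟨fun ω => q (Nat.find (hex ω)), measurable_from_nat.comp (measurable_find hex fun j =>
      (hopen _ isOpen_ball).inter (hw isOpen_ball.measurableSet)), fun ω => ?_, fun ω => ?_⟩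
  · obtain ⟨y, hy, hyA⟩ := (Nat.find_spec (hex ω)).1
    exact ⟨y, hyA, hy⟩
  · exact dist_comm (w ω) _ ▸ (Nat.find_spec (hex ω)).2

theorem exists_measurable_near_one_denseRange [MeasurableSpace Y] (hq : DenseRange q)
    (hopen : ∀ U : Set Y, IsOpen U → MeasurableSet {ω | ∃ y ∈ U, (ω, y) ∈ A})
    (hne : ∀ ω, ∃ y, (ω, y) ∈ A) :
    ∃ w : Ω → Y, Measurable w ∧ ∀ ω, ∃ y, (ω, y) ∈ A ∧ dist y (w ω) < 1 := by
  classical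
  have hex : ∀ ω, ∃ j, ∃ y ∈ ball (q j) 1, (ω, y) ∈ A := fun ω => by
    obtain ⟨y, hyA⟩ := hne ω
    obtain ⟨j, hj⟩ := hq.exists_dist_lt y one_pos
    exact ⟨j, y, mem_ball.2 hj, hyA⟩
  refine ⟨fun ω => q (Nat.find (hex ω)),
    measurable_from_nat.comp (measurable_find hex fun j => hopen _ isOpen_ball), fun ω => ?_⟩
  obtain ⟨y, hy, hyA⟩ := Nat.find_spec (hex ω)
  exact ⟨y, hyA, hy⟩

theorem exists_seq_measurable_near_denseRange [MeasurableSpace Y] [OpensMeasurableSpace Y]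
    [Nonempty Y] (hq : DenseRange q)
    (hopen : ∀ U : Set Y, IsOpen U → MeasurableSet {ω | ∃ y ∈ U, (ω, y) ∈ A})
    (hne : ∀ ω, ∃ y, (ω, y) ∈ A) :
    ∃ w : ℕ → Ω → Y, (∀ n, Measurable (w n)) ∧
      (∀ n ω, ∃ y, (ω, y) ∈ A ∧ dist y (w n ω) < (1 / 2) ^ n) ∧
      ∀ n ω, dist (w n ω) (w (n + 1) ω) ≤ 3 / 2 * (1 / 2) ^ n := by
  obtain ⟨w₀, hw₀, hw₀A⟩ := exists_measurable_near_one_denseRange hq hopen hne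
  choose! next hnext using fun n (w : Ω → Y) (hw : Measurable w) hwA =>
    exists_measurable_near_denseRange hq hopen hw (ε := (1 / 2) ^ n) (δ := (1 / 2) ^ (n + 1))
      (by positivity) hwA
  let w : ℕ → Ω → Y := fun n => Nat.rec w₀ next n
  have hw : ∀ n, Measurable (w n) ∧ ∀ ω, ∃ y, (ω, y) ∈ A ∧ dist y (w n ω) < (1 / 2) ^ n := by
    intro n
    induction n with
    | zero => simpa using ⟨hw₀, hw₀A⟩
    | succ n ih => exact ⟨(hnext n _ ih.1 ih.2).1, (hnext n _ ih.1 ih.2).2.1⟩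
  refine ⟨w, fun n => (hw n).1, fun n => (hw n).2, fun n ω => ?_⟩
  rw [dist_comm]
  exact ((hnext n (w n) (hw n).1 (hw n).2).2.2 ω).le.trans_eq (by ring)

theorem exists_measurable_selection [CompleteSpace Y] [SecondCountableTopology Y] [Nonempty Y]
    [MeasurableSpace Y] [BorelSpace Y] (hclosed : ∀ ω, IsClosed {y | (ω, y) ∈ A})
    (hne : ∀ ω, ∃ y, (ω, y) ∈ A)
    (hopen : ∀ U : Set Y, IsOpen U → MeasurableSet {ω | ∃ y ∈ U, (ω, y) ∈ A}) :
    ∃ v : Ω → Y, Measurable v ∧ ∀ ω, (ω, v ω) ∈ A := by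
  obtain ⟨q, hq⟩ := TopologicalSpace.exists_dense_seq Y
  obtain ⟨w, hw, hwA, hdist⟩ := exists_seq_measurable_near_denseRange hq hopen hne
  choose v hv using fun ω =>
    cauchySeq_tendsto_of_complete (cauchySeq_of_le_geometric _ _ (by norm_num) (hdist · ω))
  refine ⟨v, measurable_of_tendsto_metrizable hw (tendsto_pi_nhds.2 hv), fun ω => ?_⟩
  choose y hyA hyw using fun n => hwA n ω
  have hy : Tendsto y atTop (𝓝 (v ω)) :=
    (hv ω).congr_dist <| squeeze_zero (fun _ => dist_nonneg)
    (fun n => (dist_comm _ _).trans_le (hyw n).le)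
    (tendsto_pow_atTop_nhds_zero_of_lt_one (by norm_num) (by norm_num))
  exact (hclosed ω).mem_of_tendsto hy (Eventually.of_forall hyA)

end Selection

theorem exists_measurable_ae_selection_of_complete {Ω Y : Type*} {m0 : MeasurableSpace Ω}
    {μ : Measure Ω} [IsFiniteMeasure μ] [MetricSpace Y] [CompleteSpace Y]
    [SecondCountableTopology Y] [Nonempty Y] [MeasurableSpace Y] [BorelSpace Y]
    {G : MeasurableSpace Ω} (hle : G ≤ m0) (hnull : ∀ s, μ s = 0 → MeasurableSet[G] s)
    {A : Set (Ω × Y)} (hA : MeasurableSet[G.prod inferInstance] A)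
    (hclosed : ∀ ω, IsClosed {y | (ω, y) ∈ A}) (hne : ∀ᵐ ω ∂μ, ∃ y, (ω, y) ∈ A) :
    ∃ v : Ω → Y, Measurable[G] v ∧ ∀ᵐ ω ∂μ, (ω, v ω) ∈ A := by
  -- fill the empty fibres with all of `Y`, so that a selection exists everywhere
  set A' := A ∪ (Prod.fst '' A)ᶜ ×ˢ univ
  have hA' : MeasurableSet[G.prod inferInstance] A' :=
    hA.union ((MeasurableSet.image_fst_of_complete hle hnull hA).compl.prod .univ)
  have hclosed' (ω : Ω) : IsClosed {y | (ω, y) ∈ A'} := by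
    by_cases hω : ω ∈ Prod.fst '' A
    · simpa [A', hω] using hclosed ω
    · simp [A', hω]
  have hne' (ω : Ω) : ∃ y, (ω, y) ∈ A' := by
    by_cases hω : ω ∈ Prod.fst '' A
    · obtain ⟨⟨_, y⟩, hy, rfl⟩ := hω
      exact ⟨y, .inl hy⟩
    · exact ⟨Classical.arbitrary Y, .inr ⟨hω, trivial⟩⟩
  have hopen (U : Set Y) (hU : IsOpen U) :
      MeasurableSet[G] {ω | ∃ y ∈ U, (ω, y) ∈ A'} := by
    convert MeasurableSet.image_fst_of_complete hle hnull
      (hA'.inter (MeasurableSet.univ.prod hU.measurableSet)) using 1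
    ext ω
    simp [and_comm]
  obtain ⟨v, hv, hvA⟩ := exists_measurable_selection hclosed' hne' hopen
  refine ⟨v, hv, ?_⟩
  filter_upwards [hne] with ω ⟨y, hy⟩
  exact (hvA ω).resolve_right fun h => h.1 ⟨(ω, y), hy, rfl⟩

theorem measurableSet_setOf_prodMk_mem {Ω Y Y' : Type*} {mΩ : MeasurableSpace Ω}
    [MeasurableSpace Y] [MeasurableSpace Y'] {Z : Ω → Set (Y' × Y)}
    (hZ : MeasurableSet {q : Ω × (Y' × Y) | q.2 ∈ Z q.1}) {u : Ω → Y'} (hu : Measurable u) :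
    MeasurableSet {p : Ω × Y | (u p.1, p.2) ∈ Z p.1} :=
  (measurable_fst.prodMk ((hu.comp measurable_fst).prodMk measurable_snd)) hZ

theorem l1_nonneg {k : ℕ} (a : Fin k → ℝ) : 0 ≤ l1 a :=
  Finset.sum_nonneg fun i _ => abs_nonneg (a i)

theorem exists_ae_l1_le_of_le_mul {Ω : Type*} [MeasurableSpace Ω] {μ : Measure Ω} {k k' : ℕ}
    {x : Ω → Fin k → ℝ} {y : Ω → Fin k' → ℝ} (hy : ∃ C, ∀ᵐ ω ∂μ, l1 (y ω) ≤ C) (c : ℝ)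
    (hxy : ∀ᵐ ω ∂μ, l1 (x ω) ≤ c * l1 (y ω)) : ∃ C, ∀ᵐ ω ∂μ, l1 (x ω) ≤ C := by
  obtain ⟨C, hC⟩ := hy
  refine ⟨|c| * C, ?_⟩
  filter_upwards [hxy, hC] with ω hxy hyC
  calc l1 (x ω) ≤ c * l1 (y ω) := hxy
    _ ≤ |c| * l1 (y ω) := mul_le_mul_of_nonneg_right (le_abs_self c) (l1_nonneg _)
    _ ≤ |c| * C := mul_le_mul_of_nonneg_left hyC (abs_nonneg c)

/-- **Lemma 2**: for every `t ∈ {1, …, N}` and every `u ∈ 𝒰_t` there exists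
`v ∈ 𝒱_t = 𝒳_t` such that `(u, v) ∈ 𝒲_t`, i.e. `(u(ω), v(ω)) ∈ Z_t(ω)` a.s. -/
theorem exists_successor_state
    {Ω : Type*} [m0 : MeasurableSpace Ω] {μ : MeasureTheory.Measure Ω}
    [MeasureTheory.IsProbabilityMeasure μ]
    {N : ℕ} {m : ℕ → ℕ} (S : VNG Ω μ N m)
    (hA2 : S.A2) (hA3 : S.A3)
    (t : ℕ) (ht1 : 1 ≤ t) (htN : t ≤ N)
    (u : Ω → Fin (m (t - 1)) → ℝ)
    (hu_mem : MemLinf μ (S.F t) u)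
    (hu_X : ∀ᵐ ω ∂μ, u ω ∈ S.X (t - 1) ω) :
    ∃ v : Ω → Fin (m t) → ℝ,
      MemLinf μ (S.F t) v ∧ (∀ᵐ ω ∂μ, v ω ∈ S.X t ω) ∧
      ∀ᵐ ω ∂μ, (u ω, v ω) ∈ S.Z t ω := by
  obtain ⟨K, hK⟩ := hA3
  have hsuccessor : ∀ᵐ ω ∂μ, ∃ b, (u ω, b) ∈ S.Z t ω := by
    filter_upwards [hu_X] with ω hω
    obtain ⟨b, -, hb⟩ := hA2 t ht1 htN ω (u ω) hω
    exact ⟨b, hb⟩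
  obtain ⟨v, hv, hvZ⟩ := exists_measurable_ae_selection_of_complete (S.F_le t) (S.F_null t)
    (measurableSet_setOf_prodMk_mem (S.Z_meas t ht1 htN) hu_mem.1)
    (fun ω => (S.Z_closed t ht1 htN ω).preimage (Continuous.prodMk_right (u ω))) hsuccessor
  have hbound : ∀ᵐ ω ∂μ, l1 (v ω) ≤ K t * l1 (u ω) := hvZ.mono fun ω h => hK t ht1 htN ω _ h
  exact ⟨v, ⟨hv, exists_ae_l1_le_of_le_mul hu_mem.2 (K t) hbound⟩,
    hvZ.mono fun ω h => (S.Z_sub t ht1 htN ω h).2, hvZ⟩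
end
end
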